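/- Let H be a complex Hilbert space with dim H = 3, fix π/4 < α < π/2, set a := cos α, and let {e₁, e₂} ⊆ H be an orthonormal system. Then: (ii) if a ≠ 1/√3 and c ≥ d > a with c² + d² = 1, then the circle {[c·e₁ + λ·d·e₂] : λ ∈ ℂ, |λ| = 1} is highly-α-symmetric; (iii) if a = 1/√3 and c > d > a with c² + d² = 1, then the circle {[c·e₁ + λ·d·e₂] : λ ∈ ℂ, |λ| = 1} is highly-α-symmetric; (iv) if 0 < d < min{a, √((1 − 2a²)/(1 − a²))} and c² + d² = 1 with c > 0, then the circle {[c·e₁ + λ·d·e₂] : λ ∈ ℂ, |λ| = 1} is not highly-α-symmetric. -/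

import Mathlib

noncomputable section

variable {H : Type*} [NormedAddCommGroup H] [InnerProductSpace ℂ H]

/-- The quantum angle (Fubini–Study distance) between two lines,
computed from unit representatives. -/
def qAngle (x y : Projectivization ℂ H) : ℝ :=
  Real.arccos (‖(inner ℂ x.rep y.rep : ℂ)‖ / (‖x.rep‖ * ‖y.rep‖))

/-- The α-set of a set of lines. -/
def alphaSet (α : ℝ) (S : Set (Projectivization ℂ H)) : Set (Projectivization ℂ H) :=
  {x | ∀ y ∈ S, qAngle x y = α}

/-- φ is a Wigner symmetry: it is induced by a unitary or an antiunitary operator. -/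
def IsWignerSymmetry (φ : Projectivization ℂ H → Projectivization ℂ H) : Prop :=
  ∃ U : H → H,
    ((∃ e : H ≃ₗᵢ[ℂ] H, U = ⇑e) ∨ (∃ e : H ≃ₗᵢ⋆[ℂ] H, U = ⇑e)) ∧
    ∀ (v : H) (hv : v ≠ 0),
      (φ (Projectivization.mk ℂ v hv)).submodule = Submodule.span ℂ {U v}

/-- The circle determined by an orthonormal pair and coefficients c, d. -/
def circleSet (e₁ e₂ : H) (c d : ℝ) : Set (Projectivization ℂ H) :=
  {x | ∃ lam : ℂ, ‖lam‖ = 1 ∧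
    x.submodule = Submodule.span ℂ {(c : ℂ) • e₁ + (lam * d) • e₂}}

/-- A circle in the projective space. -/
def IsCircle (T : Set (Projectivization ℂ H)) : Prop :=
  ∃ (e₁ e₂ : H) (c d : ℝ), ‖e₁‖ = 1 ∧ ‖e₂‖ = 1 ∧ (inner ℂ e₁ e₂ : ℂ) = 0 ∧
    0 < c ∧ 0 < d ∧ c ^ 2 + d ^ 2 = 1 ∧ T = circleSet e₁ e₂ c d

/-- A highly-α-symmetric set. -/
def IsHighlyAlphaSymmetric (α : ℝ) (T : Set (Projectivization ℂ H)) : Prop :=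
  T.Infinite ∧ (alphaSet α T).Infinite ∧
    ∀ S : Set (Projectivization ℂ H), S ⊆ T → S.ncard = 3 →
      alphaSet α (alphaSet α S) = T

/-!
For a unit vector `v`, `⟪v, c e + l d f⟫ = c ⟪v, e⟫ + l d ⟪v, f⟫`, and the modulus of
`p + l q` is the same for three distinct unimodular `l` only if `p = 0` or `q = 0`. Hence any
three points of the circle have the same α-set as the whole circle: the lines `[v]` with
`⟪v, f⟫ = 0, c |⟪v, e⟫| = cos α` or `⟪v, e⟫ = 0, d |⟪v, f⟫| = cos α`.

In dimension three, with `g ⊥ e, f` and `cos α < c, d`, these are two circles, through `e, g`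
and through `f, g`. Running the same computation on them shows that the double α-set lies in the
original circle together with `[g]`, and `[g]` can belong to it only when `c = d` and
`cos² α = 1/3`. If `d < cos α` only the circle through `e, g` is left, and its α-set contains a
line `[s f + t g]` that is not on the original circle.
-/

open Real Projectivization ComplexConjugate
open scoped InnerProductSpace LinearAlgebra.Projectivization

namespace Complex

lemma im_eq_or_eq_neg_of_re_eq_of_norm_eq {z w : ℂ} (hre : z.re = w.re) (hn : ‖z‖ = ‖w‖) :
    z.im = w.im ∨ z.im = -w.im := by
  rw [← sq_eq_sq_iff_eq_or_eq_neg]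
  have h := congrArg (· ^ 2) hn
  simp only [Complex.sq_norm, normSq_apply, hre] at h
  linear_combination h

/-- A vertical line meets a circle centred at `0` in at most two points. -/
lemma eq_zero_of_re_mul_eq_re_mul {w l₁ l₂ l₃ : ℂ} (h₁ : ‖l₁‖ = 1) (h₂ : ‖l₂‖ = 1)
    (h₃ : ‖l₃‖ = 1) (h₁₂ : l₁ ≠ l₂) (h₁₃ : l₁ ≠ l₃) (h₂₃ : l₂ ≠ l₃)
    (e₁₂ : (l₁ * w).re = (l₂ * w).re) (e₁₃ : (l₁ * w).re = (l₃ * w).re) : w = 0 := by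
  by_contra hw
  have hn {l : ℂ} (hl : ‖l‖ = 1) : ‖l * w‖ = ‖w‖ := by rw [norm_mul, hl, one_mul]
  have him {l l' : ℂ} (hne : l ≠ l') (hre : (l * w).re = (l' * w).re) :
      (l * w).im ≠ (l' * w).im := fun him => hne (mul_right_cancel₀ hw (Complex.ext hre him))
  rcases im_eq_or_eq_neg_of_re_eq_of_norm_eq e₁₂ ((hn h₁).trans (hn h₂).symm) with i₁₂ | i₁₂
  · exact him h₁₂ e₁₂ i₁₂
  rcases im_eq_or_eq_neg_of_re_eq_of_norm_eq e₁₃ ((hn h₁).trans (hn h₃).symm) with i₁₃ | i₁₃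
  · exact him h₁₃ e₁₃ i₁₃
  exact him h₂₃ (e₁₂.symm.trans e₁₃) (by linarith)

lemma eq_zero_or_eq_zero_of_norm_add_mul_eq {p q l₁ l₂ l₃ : ℂ} {r : ℝ} (h₁ : ‖l₁‖ = 1)
    (h₂ : ‖l₂‖ = 1) (h₃ : ‖l₃‖ = 1) (h₁₂ : l₁ ≠ l₂) (h₁₃ : l₁ ≠ l₃) (h₂₃ : l₂ ≠ l₃)
    (e₁ : ‖p + l₁ * q‖ = r) (e₂ : ‖p + l₂ * q‖ = r) (e₃ : ‖p + l₃ * q‖ = r) :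
    p = 0 ∨ q = 0 := by
  have expand {l : ℂ} (hl : ‖l‖ = 1) :
      ‖p + l * q‖ ^ 2 = ‖p‖ ^ 2 + ‖q‖ ^ 2 + 2 * (l * (q * conj p)).re := by
    rw [add_comm, Complex.sq_norm, normSq_add, ← Complex.sq_norm, ← Complex.sq_norm, norm_mul, hl,
      one_mul, mul_assoc]
    ring
  have E₁ := expand h₁
  have E₂ := expand h₂
  have E₃ := expand h₃
  rw [e₁] at E₁
  rw [e₂] at E₂
  rw [e₃] at E₃
  have hw := eq_zero_of_re_mul_eq_re_mul h₁ h₂ h₃ h₁₂ h₁₃ h₂₃ (by linarith) (by linarith)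
  simpa [or_comm] using hw

end Complex

section ProjectiveAngle

variable {x y : ℙ ℂ H} {v u : H}

lemma qAngle_comm (x y : ℙ ℂ H) : qAngle x y = qAngle y x := by
  rw [qAngle, qAngle, norm_inner_symm, mul_comm]

lemma qAngle_eq_arccos (hx : x.submodule = ℂ ∙ v) (hy : y.submodule = ℂ ∙ u) :
    qAngle x y = arccos (‖⟪v, u⟫_ℂ‖ / (‖v‖ * ‖u‖)) := by
  rw [x.submodule_eq, Submodule.span_singleton_eq_span_singleton] at hx
  rw [y.submodule_eq, Submodule.span_singleton_eq_span_singleton] at hy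
  obtain ⟨s, rfl⟩ := hx
  obtain ⟨t, rfl⟩ := hy
  have hs : ‖(s : ℂ)‖ ≠ 0 := by simp
  have ht : ‖(t : ℂ)‖ ≠ 0 := by simp
  have hx₀ : ‖x.rep‖ ≠ 0 := norm_ne_zero_iff.mpr x.rep_nonzero
  have hy₀ : ‖y.rep‖ ≠ 0 := norm_ne_zero_iff.mpr y.rep_nonzero
  rw [qAngle, Units.smul_def, Units.smul_def, inner_smul_left, inner_smul_right, norm_smul,
    norm_smul, norm_mul, norm_mul, RCLike.norm_conj]
  congr 1
  field_simp

lemma qAngle_eq_iff {α : ℝ} (hα₀ : 0 ≤ α) (hα : α ≤ π) (hx : x.submodule = ℂ ∙ v)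
    (hy : y.submodule = ℂ ∙ u) (hv : ‖v‖ = 1) (hu : ‖u‖ = 1) :
    qAngle x y = α ↔ ‖⟪v, u⟫_ℂ‖ = cos α := by
  rw [qAngle_eq_arccos hx hy, hv, hu, mul_one, div_one]
  constructor
  · rintro rfl
    exact (cos_arccos (by linarith [norm_nonneg ⟪v, u⟫_ℂ])
      (by simpa [hv, hu] using norm_inner_le_norm (𝕜 := ℂ) v u)).symm
  · intro h
    rw [h, arccos_cos hα₀ hα]

lemma exists_norm_eq_one_submodule_eq (x : ℙ ℂ H) : ∃ v : H, ‖v‖ = 1 ∧ x.submodule = ℂ ∙ v := by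
  have hunit : IsUnit ((‖x.rep‖ : ℂ)⁻¹) := by simp [x.rep_nonzero]
  exact ⟨_, norm_smul_inv_norm x.rep_nonzero,
    by rw [x.submodule_eq]; exact (Submodule.span_singleton_smul_eq hunit _).symm⟩

lemma alphaSet_anti {α : ℝ} {S T : Set (ℙ ℂ H)} (h : S ⊆ T) : alphaSet α T ⊆ alphaSet α S :=
  fun _ hx y hy => hx y (h hy)

lemma subset_alphaSet_alphaSet (α : ℝ) (S : Set (ℙ ℂ H)) : S ⊆ alphaSet α (alphaSet α S) :=
  fun _ hy _ hx => (qAngle_comm _ _).trans (hx _ hy)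

end ProjectiveAngle

section Circle

variable {e f : H} {c d : ℝ}

def circlePoint (e f : H) (c d : ℝ) (l : ℂ) : H := (c : ℂ) • e + (l * d) • f

lemma mem_circleSet {x : ℙ ℂ H} :
    x ∈ circleSet e f c d ↔ ∃ l : ℂ, ‖l‖ = 1 ∧ x.submodule = ℂ ∙ circlePoint e f c d l :=
  Iff.rfl

lemma circleSet_comm (e f : H) (c d : ℝ) : circleSet e f c d = circleSet f e d c := by
  suffices key : ∀ (e f : H) (c d : ℝ), circleSet e f c d ⊆ circleSet f e d c from
    (key e f c d).antisymm (key f e d c)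
  intro e f c d x hx
  obtain ⟨l, hl, hx⟩ := mem_circleSet.mp hx
  have hunit : IsUnit l := isUnit_iff_ne_zero.mpr (by rintro rfl; simp at hl)
  have hll : l * conj l = 1 := by
    rw [Complex.mul_conj, Complex.normSq_eq_norm_sq, hl]; simp
  refine mem_circleSet.mpr ⟨conj l, by rwa [Complex.norm_conj], ?_⟩
  rw [hx, ← Submodule.span_singleton_smul_eq hunit (circlePoint f e d c (conj l))]
  congr 2
  rw [circlePoint, circlePoint, smul_add, smul_smul, smul_smul, ← mul_assoc, hll, one_mul,
    add_comm]

lemma inner_circlePoint_right (v : H) (l : ℂ) :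
    ⟪v, circlePoint e f c d l⟫_ℂ = c * ⟪v, e⟫_ℂ + l * (d * ⟪v, f⟫_ℂ) := by
  simp only [circlePoint, inner_add_right, inner_smul_right]
  ring

lemma inner_fst_circlePoint (he : ‖e‖ = 1) (hef : ⟪e, f⟫_ℂ = 0) (l : ℂ) :
    ⟪e, circlePoint e f c d l⟫_ℂ = c := by
  rw [inner_circlePoint_right, inner_self_eq_norm_sq_to_K, he, hef]
  simp

lemma inner_snd_circlePoint (hf : ‖f‖ = 1) (hef : ⟪e, f⟫_ℂ = 0) (l : ℂ) :
    ⟪f, circlePoint e f c d l⟫_ℂ = l * d := by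
  rw [inner_circlePoint_right, inner_self_eq_norm_sq_to_K, hf, ← inner_conj_symm, hef]
  simp

lemma circlePoint_ne_zero (he : ‖e‖ = 1) (hef : ⟪e, f⟫_ℂ = 0) (hc : c ≠ 0) (l : ℂ) :
    circlePoint e f c d l ≠ 0 := fun h =>
  hc <| by simpa [h] using (inner_fst_circlePoint (c := c) (d := d) he hef l).symm

lemma norm_circlePoint (he : ‖e‖ = 1) (hf : ‖f‖ = 1) (hef : ⟪e, f⟫_ℂ = 0)
    (hcd : c ^ 2 + d ^ 2 = 1) {l : ℂ} (hl : ‖l‖ = 1) : ‖circlePoint e f c d l‖ = 1 := by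
  have horth : ⟪(c : ℂ) • e, (l * d) • f⟫_ℂ = 0 := by simp [hef]
  have h := norm_add_sq_eq_norm_sq_add_norm_sq_of_inner_eq_zero _ _ horth
  simp only [norm_smul, norm_mul, hl, he, hf, Complex.norm_real, Real.norm_eq_abs] at h
  rw [← circlePoint] at h
  nlinarith [norm_nonneg (circlePoint e f c d l), sq_abs c, sq_abs d]

lemma eq_of_span_circlePoint_eq (he : ‖e‖ = 1) (hf : ‖f‖ = 1) (hef : ⟪e, f⟫_ℂ = 0) (hc : c ≠ 0)
    (hd : d ≠ 0) {l l' : ℂ} (h : ℂ ∙ circlePoint e f c d l = ℂ ∙ circlePoint e f c d l') :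
    l = l' := by
  obtain ⟨t, ht⟩ := Submodule.span_singleton_eq_span_singleton.mp h
  have h₁ := congrArg (⟪e, ·⟫_ℂ) ht
  have h₂ := congrArg (⟪f, ·⟫_ℂ) ht
  simp only [Units.smul_def, inner_smul_right, inner_fst_circlePoint he hef,
    inner_snd_circlePoint hf hef] at h₁ h₂
  have ht₁ : (t : ℂ) = 1 := by simpa [hc] using h₁
  simpa [ht₁, hd] using h₂

lemma circleSet_infinite (he : ‖e‖ = 1) (hf : ‖f‖ = 1) (hef : ⟪e, f⟫_ℂ = 0) (hc : c ≠ 0)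
    (hd : d ≠ 0) : (circleSet e f c d).Infinite := by
  have hsphere : (Metric.sphere (0 : ℂ) 1).Infinite :=
    (isPreconnected_sphere (by simp [Complex.rank_real_complex]) 0 1).infinite_of_nontrivial
      ⟨1, by simp, -1, by simp, by norm_num⟩
  refine Set.infinite_of_injOn_mapsTo
    (f := fun l => mk ℂ (circlePoint e f c d l) (circlePoint_ne_zero he hef hc l))
    (fun l _ l' _ h => ?_) (fun l hl => ⟨l, by simpa using hl, submodule_mk _ _⟩) hsphere
  simpa only [submodule_mk] using
    eq_of_span_circlePoint_eq he hf hef hc hd (congrArg Projectivization.submodule h)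

lemma mem_circleSet_of_norm_eq {x : ℙ ℂ H} {X Y : ℂ} (hc : 0 < c) (hd : 0 < d) (hX : ‖X‖ = c)
    (hY : ‖Y‖ = d) (hx : x.submodule = ℂ ∙ (X • e + Y • f)) : x ∈ circleSet e f c d := by
  have hX₀ : X ≠ 0 := by rintro rfl; simp at hX; linarith
  have hc₀ : (c : ℂ) ≠ 0 := Complex.ofReal_ne_zero.mpr hc.ne'
  have hd₀ : (d : ℂ) ≠ 0 := Complex.ofReal_ne_zero.mpr hd.ne'
  refine mem_circleSet.mpr ⟨Y * c / (X * d), ?_, ?_⟩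
  · simp only [norm_div, norm_mul, hX, hY, Complex.norm_real, Real.norm_eq_abs, abs_of_pos hc,
      abs_of_pos hd]
    field_simp
  · have hvec : X • e + Y • f = (X / c) • circlePoint e f c d (Y * c / (X * d)) := by
      rw [circlePoint, smul_add, smul_smul, smul_smul]
      congr 2 <;> field_simp
    rw [hx, hvec, Submodule.span_singleton_smul_eq (isUnit_iff_ne_zero.mpr (div_ne_zero hX₀ hc₀))]

lemma inner_ne_zero_of_mem_circleSet (he : ‖e‖ = 1) (hef : ⟪e, f⟫_ℂ = 0) (hc : c ≠ 0)
    {x : ℙ ℂ H} {u : H} (hx : x ∈ circleSet e f c d) (hu : x.submodule = ℂ ∙ u) :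
    ⟪e, u⟫_ℂ ≠ 0 := by
  obtain ⟨l, -, hl⟩ := mem_circleSet.mp hx
  obtain ⟨t, rfl⟩ := Submodule.span_singleton_eq_span_singleton.mp (hl.symm.trans hu)
  rw [Units.smul_def, inner_smul_right, inner_fst_circlePoint he hef]
  exact mul_ne_zero t.ne_zero (Complex.ofReal_ne_zero.mpr hc)

end Circle

section AlphaSetOfCircle

variable {α c d : ℝ} {e f : H}

lemma norm_inner_circlePoint_of_inner_eq_zero (hc : 0 ≤ c) (hd : 0 ≤ d) {v : H}
    (hv : ⟪v, e⟫_ℂ = 0 ∨ ⟪v, f⟫_ℂ = 0) {l : ℂ} (hl : ‖l‖ = 1) :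
    ‖⟪v, circlePoint e f c d l⟫_ℂ‖ = c * ‖⟪v, e⟫_ℂ‖ + d * ‖⟪v, f⟫_ℂ‖ := by
  rw [inner_circlePoint_right]
  rcases hv with h | h <;> simp [h, hl, abs_of_nonneg hc, abs_of_nonneg hd]

lemma mem_alphaSet_circleSet_of_inner (he : ‖e‖ = 1) (hf : ‖f‖ = 1) (hef : ⟪e, f⟫_ℂ = 0)
    (hc : 0 ≤ c) (hd : 0 ≤ d) (hcd : c ^ 2 + d ^ 2 = 1) (hα₀ : 0 ≤ α) (hα : α ≤ π)
    {x : ℙ ℂ H} {v : H} (hx : x.submodule = ℂ ∙ v) (hv : ‖v‖ = 1)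
    (hvef : ⟪v, e⟫_ℂ = 0 ∨ ⟪v, f⟫_ℂ = 0) (hnorm : c * ‖⟪v, e⟫_ℂ‖ + d * ‖⟪v, f⟫_ℂ‖ = cos α) :
    x ∈ alphaSet α (circleSet e f c d) := by
  intro y hy
  obtain ⟨l, hl, hy⟩ := mem_circleSet.mp hy
  rw [qAngle_eq_iff hα₀ hα hx hy hv (norm_circlePoint he hf hef hcd hl),
    norm_inner_circlePoint_of_inner_eq_zero hc hd hvef hl, hnorm]

lemma inner_eq_zero_or_of_mem_alphaSet (he : ‖e‖ = 1) (hf : ‖f‖ = 1) (hef : ⟪e, f⟫_ℂ = 0)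
    (hc : 0 < c) (hd : 0 < d) (hcd : c ^ 2 + d ^ 2 = 1) (hα₀ : 0 ≤ α) (hα : α ≤ π)
    {S : Set (ℙ ℂ H)} (hS : S ⊆ circleSet e f c d) (hS₃ : S.ncard = 3) {x : ℙ ℂ H} {v : H}
    (hx : x.submodule = ℂ ∙ v) (hv : ‖v‖ = 1) (hxS : x ∈ alphaSet α S) :
    (⟪v, e⟫_ℂ = 0 ∨ ⟪v, f⟫_ℂ = 0) ∧ c * ‖⟪v, e⟫_ℂ‖ + d * ‖⟪v, f⟫_ℂ‖ = cos α := by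
  obtain ⟨y₁, y₂, y₃, h₁₂, h₁₃, h₂₃, rfl⟩ := Set.ncard_eq_three.mp hS₃
  have hpt : ∀ y ∈ ({y₁, y₂, y₃} : Set (ℙ ℂ H)), ∃ l : ℂ, ‖l‖ = 1 ∧
      y.submodule = ℂ ∙ circlePoint e f c d l ∧ ‖c * ⟪v, e⟫_ℂ + l * (d * ⟪v, f⟫_ℂ)‖ = cos α := by
    intro y hy
    obtain ⟨l, hl, hyl⟩ := mem_circleSet.mp (hS hy)
    refine ⟨l, hl, hyl, ?_⟩
    rw [← inner_circlePoint_right,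
      ← qAngle_eq_iff hα₀ hα hx hyl hv (norm_circlePoint he hf hef hcd hl)]
    exact hxS y hy
  have hne {y y' : ℙ ℂ H} {l l' : ℂ} (hyy' : y ≠ y')
      (hy : y.submodule = ℂ ∙ circlePoint e f c d l)
      (hy' : y'.submodule = ℂ ∙ circlePoint e f c d l') : l ≠ l' := by
    rintro rfl
    exact hyy' (submodule_injective (hy.trans hy'.symm))
  obtain ⟨l₁, hl₁, hy₁, e₁⟩ := hpt y₁ (by simp)
  obtain ⟨l₂, hl₂, hy₂, e₂⟩ := hpt y₂ (by simp)
  obtain ⟨l₃, hl₃, hy₃, e₃⟩ := hpt y₃ (by simp)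
  have hvef : ⟪v, e⟫_ℂ = 0 ∨ ⟪v, f⟫_ℂ = 0 := by
    simpa [hc.ne', hd.ne'] using Complex.eq_zero_or_eq_zero_of_norm_add_mul_eq hl₁ hl₂ hl₃
      (hne h₁₂ hy₁ hy₂) (hne h₁₃ hy₁ hy₃) (hne h₂₃ hy₂ hy₃) e₁ e₂ e₃
  refine ⟨hvef, ?_⟩
  rw [← norm_inner_circlePoint_of_inner_eq_zero hc.le hd.le hvef hl₁, inner_circlePoint_right, e₁]

lemma alphaSet_eq_alphaSet_circleSet (he : ‖e‖ = 1) (hf : ‖f‖ = 1) (hef : ⟪e, f⟫_ℂ = 0)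
    (hc : 0 < c) (hd : 0 < d) (hcd : c ^ 2 + d ^ 2 = 1) (hα₀ : 0 ≤ α) (hα : α ≤ π)
    {S : Set (ℙ ℂ H)} (hS : S ⊆ circleSet e f c d) (hS₃ : S.ncard = 3) :
    alphaSet α S = alphaSet α (circleSet e f c d) := by
  refine Set.Subset.antisymm (fun x hx => ?_) (alphaSet_anti hS)
  obtain ⟨v, hv, hxv⟩ := exists_norm_eq_one_submodule_eq x
  obtain ⟨hvef, hnorm⟩ :=
    inner_eq_zero_or_of_mem_alphaSet he hf hef hc hd hcd hα₀ hα hS hS₃ hxv hv hx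
  exact mem_alphaSet_circleSet_of_inner he hf hef hc.le hd.le hcd hα₀ hα hxv hv hvef hnorm

lemma mem_alphaSet_circleSet_iff (he : ‖e‖ = 1) (hf : ‖f‖ = 1) (hef : ⟪e, f⟫_ℂ = 0)
    (hc : 0 < c) (hd : 0 < d) (hcd : c ^ 2 + d ^ 2 = 1) (hα₀ : 0 ≤ α) (hα : α ≤ π)
    {x : ℙ ℂ H} {v : H} (hx : x.submodule = ℂ ∙ v) (hv : ‖v‖ = 1) :
    x ∈ alphaSet α (circleSet e f c d) ↔
      (⟪v, e⟫_ℂ = 0 ∨ ⟪v, f⟫_ℂ = 0) ∧ c * ‖⟪v, e⟫_ℂ‖ + d * ‖⟪v, f⟫_ℂ‖ = cos α := by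
  obtain ⟨S, hS, -, hS₃⟩ := (circleSet_infinite he hf hef hc.ne' hd.ne').exists_subset_ncard_eq 3
  exact ⟨fun h => inner_eq_zero_or_of_mem_alphaSet he hf hef hc hd hcd hα₀ hα hS hS₃ hx hv
      (alphaSet_anti hS h),
    fun h => mem_alphaSet_circleSet_of_inner he hf hef hc.le hd.le hcd hα₀ hα hx hv h.1 h.2⟩

lemma isHighlyAlphaSymmetric_circleSet_iff (he : ‖e‖ = 1) (hf : ‖f‖ = 1) (hef : ⟪e, f⟫_ℂ = 0)
    (hc : 0 < c) (hd : 0 < d) (hcd : c ^ 2 + d ^ 2 = 1) (hα₀ : 0 ≤ α) (hα : α ≤ π) :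
    IsHighlyAlphaSymmetric α (circleSet e f c d) ↔
      (alphaSet α (circleSet e f c d)).Infinite ∧
        alphaSet α (alphaSet α (circleSet e f c d)) = circleSet e f c d := by
  have hC := circleSet_infinite he hf hef hc.ne' hd.ne'
  constructor
  · rintro ⟨-, hinf, h⟩
    obtain ⟨S, hS, -, hS₃⟩ := hC.exists_subset_ncard_eq 3
    refine ⟨hinf, ?_⟩
    rw [← alphaSet_eq_alphaSet_circleSet he hf hef hc hd hcd hα₀ hα hS hS₃]
    exact h S hS hS₃
  · rintro ⟨hinf, h⟩
    exact ⟨hC, hinf, fun S hS hS₃ => by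
      rw [alphaSet_eq_alphaSet_circleSet he hf hef hc hd hcd hα₀ hα hS hS₃, h]⟩

end AlphaSetOfCircle

section DualCircle

variable {ι : Type*} [Fintype ι] {b : OrthonormalBasis ι ℂ H} {α c d : ℝ}

lemma sq_add_sqrt_one_sub_sq_sq {t : ℝ} (ht : t ^ 2 ≤ 1) : t ^ 2 + √(1 - t ^ 2) ^ 2 = 1 := by
  rw [sq_sqrt (by linarith)]
  ring

lemma div_sq_lt_one {a c : ℝ} (ha : 0 < a) (hac : a < c) : (a / c) ^ 2 < 1 :=
  pow_lt_one₀ (div_pos ha (ha.trans hac)).le ((div_lt_one (ha.trans hac)).mpr hac) two_ne_zero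

lemma sqrt_one_sub_div_sq_pos {a c : ℝ} (ha : 0 < a) (hac : a < c) : 0 < √(1 - (a / c) ^ 2) :=
  sqrt_pos.mpr (by linarith [div_sq_lt_one ha hac])

lemma circleSet_subset_alphaSet_circleSet {i j k : ι} (hij : i ≠ j) (hik : i ≠ k) (hjk : j ≠ k)
    (hc : 0 < c) (hd : 0 < d) (hcd : c ^ 2 + d ^ 2 = 1) (hα₀ : 0 ≤ α) (hα : α ≤ π)
    (ha : 0 < cos α) (hac : cos α < c) :
    circleSet (b i) (b k) (cos α / c) √(1 - (cos α / c) ^ 2) ⊆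
      alphaSet α (circleSet (b i) (b j) c d) := by
  intro y hy
  obtain ⟨μ, hμ, hyμ⟩ := mem_circleSet.mp hy
  have hi := inner_fst_circlePoint (c := cos α / c) (d := √(1 - (cos α / c) ^ 2)) (b.norm_eq_one i)
    (b.inner_eq_zero hik) μ
  have hj : ⟪b j, circlePoint (b i) (b k) (cos α / c) √(1 - (cos α / c) ^ 2) μ⟫_ℂ = 0 := by
    rw [inner_circlePoint_right, b.inner_eq_zero hij.symm, b.inner_eq_zero hjk]
    simp
  refine mem_alphaSet_circleSet_of_inner (b.norm_eq_one i) (b.norm_eq_one j) (b.inner_eq_zero hij)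
    hc.le hd.le hcd hα₀ hα hyμ (norm_circlePoint (b.norm_eq_one i) (b.norm_eq_one k)
      (b.inner_eq_zero hik) (sq_add_sqrt_one_sub_sq_sq (div_sq_lt_one ha hac).le) hμ)
    (Or.inr (by rw [← inner_conj_symm, hj, map_zero])) ?_
  rw [norm_inner_symm, hi, norm_inner_symm, hj, Complex.norm_real, norm_zero, Real.norm_eq_abs,
    abs_of_pos (div_pos ha hc)]
  field_simp
  ring

lemma inner_eq_zero_or_of_mem_alphaSet_alphaSet {i j k : ι} (hij : i ≠ j) (hik : i ≠ k)
    (hjk : j ≠ k) (hc : 0 < c) (hd : 0 < d) (hcd : c ^ 2 + d ^ 2 = 1) (hα₀ : 0 ≤ α)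
    (hα : α ≤ π) (ha : 0 < cos α) (hac : cos α < c) {x : ℙ ℂ H} {v : H}
    (hx : x ∈ alphaSet α (alphaSet α (circleSet (b i) (b j) c d)))
    (hxv : x.submodule = ℂ ∙ v) (hv : ‖v‖ = 1) :
    (⟪v, b i⟫_ℂ = 0 ∨ ⟪v, b k⟫_ℂ = 0) ∧
      cos α / c * ‖⟪v, b i⟫_ℂ‖ + √(1 - (cos α / c) ^ 2) * ‖⟪v, b k⟫_ℂ‖ = cos α :=
  (mem_alphaSet_circleSet_iff (b.norm_eq_one i) (b.norm_eq_one k) (b.inner_eq_zero hik)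
    (div_pos ha hc) (sqrt_one_sub_div_sq_pos ha hac)
    (sq_add_sqrt_one_sub_sq_sq (div_sq_lt_one ha hac).le) hα₀ hα hxv hv).mp
    (alphaSet_anti (circleSet_subset_alphaSet_circleSet hij hik hjk hc hd hcd hα₀ hα ha hac) hx)

end DualCircle

section DimThree

variable {b : OrthonormalBasis (Fin 3) ℂ H} {α c d : ℝ}

lemma alphaSet_alphaSet_circleSet (hc : 0 < c) (hd : 0 < d) (hcd : c ^ 2 + d ^ 2 = 1)
    (hα₀ : 0 ≤ α) (hα : α ≤ π) (ha : 0 < cos α) (hac : cos α < c) (had : cos α < d)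
    (hne : c ≠ d ∨ cos α ^ 2 ≠ 1 / 3) :
    alphaSet α (alphaSet α (circleSet (b 0) (b 1) c d)) = circleSet (b 0) (b 1) c d := by
  refine Set.Subset.antisymm (fun x hx => ?_) (subset_alphaSet_alphaSet α _)
  obtain ⟨v, hv, hxv⟩ := exists_norm_eq_one_submodule_eq x
  obtain ⟨h₀, n₀⟩ := inner_eq_zero_or_of_mem_alphaSet_alphaSet (k := 2) (by decide) (by decide)
    (by decide) hc hd hcd hα₀ hα ha hac hx hxv hv
  rw [circleSet_comm] at hx
  obtain ⟨h₁, n₁⟩ := inner_eq_zero_or_of_mem_alphaSet_alphaSet (k := 2) (by decide) (by decide)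
    (by decide) hd hc (by linarith) hα₀ hα ha had hx hxv hv
  have hparseval := b.sum_sq_norm_inner_left v
  rw [Fin.sum_univ_three, hv] at hparseval
  by_cases h₂ : ⟪v, b 2⟫_ℂ = 0
  · simp only [h₂, norm_zero, mul_zero, add_zero] at n₀ n₁
    have hX : ‖⟪b 0, v⟫_ℂ‖ = c := by
      rw [norm_inner_symm]; field_simp at n₀; exact n₀
    have hY : ‖⟪b 1, v⟫_ℂ‖ = d := by
      rw [norm_inner_symm]; field_simp at n₁; exact n₁
    refine mem_circleSet_of_norm_eq hc hd hX hY ?_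
    rw [hxv]
    congr 2
    conv_lhs => rw [← b.sum_repr' v]
    rw [Fin.sum_univ_three, ← inner_conj_symm (b 2) v, h₂]
    simp
  · -- `[v] = [b 2]`, which is at angle `α` from both dual circles only in the excluded case
    exfalso
    simp only [h₀.resolve_right h₂, h₁.resolve_right h₂, norm_zero, mul_zero, zero_add]
      at n₀ n₁ hparseval
    have hv₂ : ‖⟪v, b 2⟫_ℂ‖ = 1 := by nlinarith [norm_nonneg ⟪v, b 2⟫_ℂ]
    rw [hv₂, mul_one, sqrt_eq_iff_mul_self_eq_of_pos ha] at n₀ n₁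
    have hc₂ : c ^ 2 * (1 - cos α ^ 2) = cos α ^ 2 := by field_simp at n₀; linarith
    have hd₂ : d ^ 2 * (1 - cos α ^ 2) = cos α ^ 2 := by field_simp at n₁; linarith
    have hcd' : c = d := by
      have hsin : 0 < 1 - cos α ^ 2 := by nlinarith
      nlinarith
    rcases hne with hne | hne
    · exact hne hcd'
    · subst hcd'
      exact hne (by nlinarith)

lemma inner_eq_zero_and_norm_inner_eq_of_mem_alphaSet (hc : 0 < c) (hd : 0 < d)
    (hcd : c ^ 2 + d ^ 2 = 1) (hα₀ : 0 ≤ α) (hα : α ≤ π) (hda : d < cos α) {y : ℙ ℂ H} {u : H}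
    (hy : y ∈ alphaSet α (circleSet (b 0) (b 1) c d)) (hyu : y.submodule = ℂ ∙ u)
    (hu : ‖u‖ = 1) : ⟪u, b 1⟫_ℂ = 0 ∧ ‖⟪u, b 2⟫_ℂ‖ = √(1 - (cos α / c) ^ 2) := by
  obtain ⟨h₀₁, hn⟩ := (mem_alphaSet_circleSet_iff (b.norm_eq_one 0) (b.norm_eq_one 1)
    (b.inner_eq_zero (by decide)) hc hd hcd hα₀ hα hyu hu).mp hy
  have hu₁ : ‖⟪u, b 1⟫_ℂ‖ ≤ 1 := by simpa [hu] using norm_inner_le_norm (𝕜 := ℂ) u (b 1)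
  have h₁ : ⟪u, b 1⟫_ℂ = 0 := h₀₁.resolve_left fun h₀ => by
    rw [h₀, norm_zero, mul_zero, zero_add] at hn
    nlinarith
  refine ⟨h₁, ?_⟩
  rw [h₁, norm_zero, mul_zero, add_zero] at hn
  have h₀ : ‖⟪u, b 0⟫_ℂ‖ = cos α / c := by
    field_simp
    linarith
  have hparseval := b.sum_sq_norm_inner_left u
  rw [Fin.sum_univ_three, hu, h₁, h₀, norm_zero] at hparseval
  rw [← sqrt_sq (norm_nonneg _)]
  congr 1
  linarith

lemma alphaSet_alphaSet_circleSet_ne (hc : 0 < c) (hd : 0 < d) (hcd : c ^ 2 + d ^ 2 = 1)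
    (hα₀ : 0 ≤ α) (hα : α ≤ π) (ha : 0 < cos α) (hda : d < cos α)
    (hac : cos α ^ 2 + (cos α / c) ^ 2 < 1) :
    alphaSet α (alphaSet α (circleSet (b 0) (b 1) c d)) ≠ circleSet (b 0) (b 1) c d := by
  set r := √(1 - (cos α / c) ^ 2)
  have hr : cos α < r := (lt_sqrt ha.le).mpr (by linarith)
  set w := circlePoint (b 1) (b 2) √(1 - (cos α / r) ^ 2) (cos α / r) 1
  have hw : ‖w‖ = 1 := norm_circlePoint (b.norm_eq_one 1) (b.norm_eq_one 2)
    (b.inner_eq_zero (by decide))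
    (by rw [add_comm]; exact sq_add_sqrt_one_sub_sq_sq (div_sq_lt_one ha hr).le) norm_one
  have hw₀ : w ≠ 0 := norm_ne_zero_iff.mp (by rw [hw]; exact one_ne_zero)
  have hmem : mk ℂ w hw₀ ∈ alphaSet α (alphaSet α (circleSet (b 0) (b 1) c d)) := by
    intro y hy
    obtain ⟨u, hu, hyu⟩ := exists_norm_eq_one_submodule_eq y
    obtain ⟨h₁, h₂⟩ :=
      inner_eq_zero_and_norm_inner_eq_of_mem_alphaSet hc hd hcd hα₀ hα hda hy hyu hu
    rw [qAngle_eq_iff hα₀ hα (submodule_mk w hw₀) hyu hw hu, norm_inner_symm,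
      inner_circlePoint_right, h₁]
    simp only [mul_zero, zero_add, one_mul, norm_mul, Complex.norm_real, Real.norm_eq_abs,
      abs_of_pos (div_pos ha (ha.trans hr)), h₂]
    exact div_mul_cancel₀ _ (ha.trans hr).ne'
  intro h
  rw [h] at hmem
  refine inner_ne_zero_of_mem_circleSet (b.norm_eq_one 0) (b.inner_eq_zero (by decide)) hc.ne'
    hmem (submodule_mk w hw₀) ?_
  rw [inner_circlePoint_right, b.inner_eq_zero (by decide), b.inner_eq_zero (by decide)]
  simp

theorem isHighlyAlphaSymmetric_circleSet (hc : 0 < c) (hd : 0 < d) (hcd : c ^ 2 + d ^ 2 = 1)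
    (hα₀ : 0 ≤ α) (hα : α ≤ π) (ha : 0 < cos α) (hac : cos α < c) (had : cos α < d)
    (hne : c ≠ d ∨ cos α ^ 2 ≠ 1 / 3) : IsHighlyAlphaSymmetric α (circleSet (b 0) (b 1) c d) :=
  (isHighlyAlphaSymmetric_circleSet_iff (b.norm_eq_one 0) (b.norm_eq_one 1)
    (b.inner_eq_zero (by decide)) hc hd hcd hα₀ hα).mpr
    ⟨(circleSet_infinite (b.norm_eq_one 0) (b.norm_eq_one 2) (b.inner_eq_zero (by decide))
      (div_pos ha hc).ne' (sqrt_one_sub_div_sq_pos ha hac).ne').mono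
      (circleSet_subset_alphaSet_circleSet (k := 2) (by decide) (by decide) (by decide)
        hc hd hcd hα₀ hα ha hac),
    alphaSet_alphaSet_circleSet hc hd hcd hα₀ hα ha hac had hne⟩

theorem not_isHighlyAlphaSymmetric_circleSet (hc : 0 < c) (hd : 0 < d) (hcd : c ^ 2 + d ^ 2 = 1)
    (hα₀ : 0 ≤ α) (hα : α ≤ π) (ha : 0 < cos α) (hda : d < cos α)
    (hac : cos α ^ 2 + (cos α / c) ^ 2 < 1) :
    ¬ IsHighlyAlphaSymmetric α (circleSet (b 0) (b 1) c d) := fun h =>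
  alphaSet_alphaSet_circleSet_ne hc hd hcd hα₀ hα ha hda hac
    ((isHighlyAlphaSymmetric_circleSet_iff (b.norm_eq_one 0) (b.norm_eq_one 1)
      (b.inner_eq_zero (by decide)) hc hd hcd hα₀ hα).mp h).2

end DimThree

lemma exists_orthonormalBasis_fin_three (hdim : Module.rank ℂ H = 3) {e f : H} (he : ‖e‖ = 1)
    (hf : ‖f‖ = 1) (hef : ⟪e, f⟫_ℂ = 0) :
    ∃ b : OrthonormalBasis (Fin 3) ℂ H, b 0 = e ∧ b 1 = f := by
  have hdim' : Module.rank ℂ H = (3 : ℕ) := by exact_mod_cast hdim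
  have := FiniteDimensional.of_rank_eq_nat hdim'
  have hfe : ⟪f, e⟫_ℂ = 0 := by rw [← inner_conj_symm, hef, map_zero]
  have horth : Orthonormal ℂ (({0, 1} : Set (Fin 3)).domRestrict ![e, f, 0]) := by
    rw [orthonormal_iff_ite]
    rintro ⟨i, hi⟩ ⟨j, hj⟩
    simp only [Set.mem_insert_iff, Set.mem_singleton_iff] at hi hj
    rcases hi with rfl | rfl <;> rcases hj with rfl | rfl <;>
      simp [Set.domRestrict, inner_self_eq_norm_sq_to_K, he, hf, hef, hfe]
  obtain ⟨b, hb⟩ := horth.exists_orthonormalBasis_extension_of_card_eq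
    (by simpa using Module.finrank_eq_of_rank_eq hdim')
  exact ⟨b, by simpa using hb 0 (by simp), by simpa using hb 1 (by simp)⟩

/-- which circles are highly-α-symmetric in dimension three. -/
theorem circle_highly_alpha_symmetric_dim_three
    (hdim : Module.rank ℂ H = 3)
    (α : ℝ) (hα₁ : Real.pi / 4 < α) (hα₂ : α < Real.pi / 2)
    (a : ℝ) (ha : a = Real.cos α)
    (e₁ e₂ : H) (he₁ : ‖e₁‖ = 1) (he₂ : ‖e₂‖ = 1) (he₁₂ : (inner ℂ e₁ e₂ : ℂ) = 0) :
    (∀ c d : ℝ, a ≠ 1 / Real.sqrt 3 → d ≤ c → a < d → c ^ 2 + d ^ 2 = 1 →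
      IsHighlyAlphaSymmetric α (circleSet e₁ e₂ c d)) ∧
    (∀ c d : ℝ, a = 1 / Real.sqrt 3 → d < c → a < d → c ^ 2 + d ^ 2 = 1 →
      IsHighlyAlphaSymmetric α (circleSet e₁ e₂ c d)) ∧
    (∀ c d : ℝ, 0 < d → d < a → d < Real.sqrt ((1 - 2 * a ^ 2) / (1 - a ^ 2)) →
      c ^ 2 + d ^ 2 = 1 → 0 < c →
      ¬ IsHighlyAlphaSymmetric α (circleSet e₁ e₂ c d)) := by
  subst ha
  have hα₀ : 0 < α := by linarith [pi_pos]
  have hαπ : α ≤ π := by linarith [pi_pos]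
  have hcos : 0 < cos α := cos_pos_of_mem_Ioo ⟨by linarith, hα₂⟩
  have hcos₁ : cos α < 1 := by simpa using cos_lt_cos_of_nonneg_of_le_pi le_rfl hαπ hα₀
  obtain ⟨b, rfl, rfl⟩ := exists_orthonormalBasis_fin_three hdim he₁ he₂ he₁₂
  refine ⟨fun c d hne hdc had hcd => ?_, fun c d _ hdc had hcd => ?_,
    fun c d hd hda hdr hcd hc => ?_⟩
  · refine isHighlyAlphaSymmetric_circleSet (hcos.trans (had.trans_le hdc)) (hcos.trans had) hcd
      hα₀.le hαπ hcos (had.trans_le hdc) had (Or.inr fun h => hne ?_)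
    rw [← sqrt_sq hcos.le, h, one_div, sqrt_inv, one_div]
  · exact isHighlyAlphaSymmetric_circleSet (hcos.trans (had.trans hdc)) (hcos.trans had) hcd
      hα₀.le hαπ hcos (had.trans hdc) had (Or.inl hdc.ne')
  · refine not_isHighlyAlphaSymmetric_circleSet hc hd hcd hα₀.le hαπ hcos hda ?_
    -- `d < √((1 - 2a²)/(1 - a²))` is `a² (1 + c²) < c²` once `d² = 1 - c²`
    have hdr' : d ^ 2 * (1 - cos α ^ 2) < 1 - 2 * cos α ^ 2 :=
      (lt_div_iff₀ (by nlinarith)).mp ((lt_sqrt hd.le).mp hdr)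
    have hc₂ : cos α ^ 2 * c ^ 2 + cos α ^ 2 < c ^ 2 := by nlinarith
    rw [div_pow, ← lt_sub_iff_add_lt', div_lt_iff₀ (by positivity)]
    nlinarith
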